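/- Let η be an ordinal with η < add(N)⁺ (the successor cardinal of add(N), cardinals identified with their initial ordinals), and let (M_α)_{α<η} be subsets of [0,1] with M_α ⊆ M_β whenever α ≤ β < η. Then there exists a family (A_α)_{α<η} of G_δ subsets of [0,1] such that A_α is a hull of M_α for every α < η (i.e. M_α ⊆ A_α and λ*(A_α) = λ*(M_α)) and A_α ⊆ A_β whenever α ≤ β < η. -/

import Mathlib

/-!
The function `α ↦ λ*(M α)` is monotone, hence constant on "plateaus"; its values form a
well-ordered set of reals, so there are only countably many plateaus. At the countably many
plateau starts `d` one can pick monotone Gδ hulls `B d` by intersecting hulls of countable unions.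
Inside the plateau of `d` the excess `M α \ B d` is null. A plateau has at most `add(N)` elements,
so along a fundamental sequence of it every stage has fewer than `add(N)` predecessors, and the
excesses are covered by a monotone chain of null Gδ sets, each the hull of the union of the
earlier ones. Cutting this chain down to a hull of `M` at the end of the plateau keeps it inside
all later bases.
-/

open MeasureTheory Set

noncomputable section

def NullSets : Set (Set ℝ) := {A | A ⊆ Icc (0:ℝ) 1 ∧ volume A = 0}

/-- `add(N)`: the least cardinality of a family of null subsets of `[0,1]` whose union
is not null. -/
def addNull : Cardinal :=
  sInf { c | ∃ F : Set (Set ℝ), (∀ A ∈ F, A ∈ NullSets) ∧ volume (⋃₀ F) ≠ 0 ∧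
    c = Cardinal.mk F }

open Filter Topology Ordinal
open scoped ENNReal

theorem MeasureTheory.Measure.exists_isGδ_superset_measure_eq {X : Type*} [TopologicalSpace X]
    [MeasurableSpace X] (μ : Measure X) [μ.OuterRegular] (s : Set X) :
    ∃ G, IsGδ G ∧ s ⊆ G ∧ μ G = μ s := by
  rcases eq_top_or_lt_top (μ s) with hs | hs
  · refine ⟨univ, .univ, subset_univ s, ?_⟩
    rw [hs]
    exact top_unique (hs ▸ measure_mono (subset_univ s))
  have hU (n : ℕ) : ∃ U ⊇ s, IsOpen U ∧ μ U < μ s + (n : ℝ≥0∞)⁻¹ :=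
    s.exists_isOpen_lt_of_lt _ (ENNReal.lt_add_right hs.ne (by simp))
  choose U hsU hU hμU using hU
  refine ⟨⋂ n, U n, .iInter_of_isOpen hU, subset_iInter hsU,
    le_antisymm ?_ (measure_mono (subset_iInter hsU))⟩
  have hlim : Tendsto (fun n : ℕ => μ s + (n : ℝ≥0∞)⁻¹) atTop (𝓝 (μ s)) := by
    simpa using tendsto_const_nhds.add ENNReal.tendsto_inv_nat_nhds_zero
  exact ge_of_tendsto' hlim fun n => (measure_mono (iInter_subset U n)).trans (hμU n).le

theorem MeasureTheory.measure_sdiff_eq_zero_of_le {X : Type*} [MeasurableSpace X] {μ : Measure X}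
    {s H T : Set X} (hT : MeasurableSet T) (hsT : s ⊆ T) (hsH : s ⊆ H) (hH : μ H ≤ μ s)
    (hfin : μ H ≠ ∞) : μ (H \ T) = 0 := by
  have hfin' : μ (H ∩ T) ≠ ∞ := ne_top_of_le_ne_top hfin (measure_mono inter_subset_left)
  refine nonpos_iff_eq_zero.1 ((ENNReal.add_le_add_iff_left hfin').1 ?_)
  rw [add_zero, measure_inter_add_sdiff H hT]
  exact hH.trans (measure_mono (subset_inter hsH hsT))

theorem StrictMonoOn.countable_of_wellFoundedLT {ι α : Type*} [LinearOrder ι] [WellFoundedLT ι]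
    [LinearOrder α] [TopologicalSpace α] [OrderTopology α] [SecondCountableTopology α]
    {f : ι → α} {s : Set ι} (hf : StrictMonoOn f s) : s.Countable := by
  refine MapsTo.countable_of_injOn (mapsTo_image f s) hf.injOn
    ((countable_setOfPred_isolated_right_within (s := f '' s)).mono ?_)
  rintro _ ⟨a, ha, rfl⟩
  refine ⟨mem_image_of_mem f ha, ?_⟩
  rw [← empty_mem_iff_bot, mem_nhdsWithin]
  by_cases hnext : {b ∈ s | a < b}.Nonempty
  · obtain ⟨b, ⟨hb, hab⟩, hmin⟩ := WellFounded.has_min wellFounded_lt _ hnext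
    refine ⟨Iio (f b), isOpen_Iio, hf ha hb hab, ?_⟩
    rintro _ ⟨hcb, ⟨c, hc, rfl⟩, hac⟩
    exact hmin c ⟨hc, (hf.lt_iff_lt ha hc).1 hac⟩ ((hf.lt_iff_lt hc hb).1 hcb)
  · refine ⟨univ, isOpen_univ, mem_univ _, ?_⟩
    rintro _ ⟨-, ⟨c, hc, rfl⟩, hac⟩
    exact hnext ⟨c, hc, (hf.lt_iff_lt ha hc).1 hac⟩

def gdeltaHull (s : Set ℝ) : Set ℝ :=
  (volume.exists_isGδ_superset_measure_eq s).choose ∩ Icc 0 1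

theorem isGδ_gdeltaHull (s : Set ℝ) : IsGδ (gdeltaHull s) :=
  (volume.exists_isGδ_superset_measure_eq s).choose_spec.1.inter isClosed_Icc.isGδ

theorem gdeltaHull_subset_Icc (s : Set ℝ) : gdeltaHull s ⊆ Icc 0 1 := inter_subset_right

theorem inter_Icc_subset_gdeltaHull (s : Set ℝ) : s ∩ Icc 0 1 ⊆ gdeltaHull s :=
  inter_subset_inter_left _ (volume.exists_isGδ_superset_measure_eq s).choose_spec.2.1

theorem subset_gdeltaHull {s : Set ℝ} (hs : s ⊆ Icc 0 1) : s ⊆ gdeltaHull s :=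
  fun _ hx => inter_Icc_subset_gdeltaHull s ⟨hx, hs hx⟩

theorem volume_gdeltaHull_le (s : Set ℝ) : volume (gdeltaHull s) ≤ volume s :=
  (measure_mono inter_subset_left).trans
    (volume.exists_isGδ_superset_measure_eq s).choose_spec.2.2.le

theorem volume_ne_top_of_subset_Icc {s : Set ℝ} (hs : s ⊆ Icc 0 1) : volume s ≠ ∞ :=
  ne_top_of_le_ne_top (by simp) (measure_mono hs)

theorem volume_gdeltaHull_sdiff_gdeltaHull {s t : Set ℝ} (hst : s ⊆ t) (ht : t ⊆ Icc 0 1) :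
    volume (gdeltaHull s \ gdeltaHull t) = 0 :=
  measure_sdiff_eq_zero_of_le (isGδ_gdeltaHull t).measurableSet
    (hst.trans (subset_gdeltaHull ht)) (subset_gdeltaHull (hst.trans ht))
    (volume_gdeltaHull_le s) (volume_ne_top_of_subset_Icc (gdeltaHull_subset_Icc s))

theorem volume_iUnion_eq_zero_of_mk_lt_addNull {ι : Type} {S : ι → Set ℝ}
    (hι : Cardinal.mk ι < addNull) (hS : ∀ i, S i ∈ NullSets) : volume (⋃ i, S i) = 0 := by
  by_contra h
  refine (Cardinal.mk_range_le.trans_lt hι).not_ge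
    (csInf_le' ⟨range S, ?_, by rwa [sUnion_range], rfl⟩)
  rintro _ ⟨i, rfl⟩
  exact hS i

theorem volume_biUnion_Iio_eq_zero_of_card_lt_addNull {i : Ordinal.{0}} (hi : i.card < addNull)
    {S : Ordinal → Set ℝ} (hS : ∀ j < i, S j ∈ NullSets) : volume (⋃ j < i, S j) = 0 := by
  have hunion : ⋃ x : i.ToType, S (ToType.mk.symm x) = ⋃ j < i, S j := by
    rw [ToType.mk.symm.surjective.iUnion_comp (fun j : Iio i => S j), iUnion_subtype]; rfl
  rw [← hunion]
  exact volume_iUnion_eq_zero_of_mk_lt_addNull (by rwa [Cardinal.mk_toType])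
    fun x => hS _ (ToType.mk.symm x).2

def chainHull (P : Ordinal.{0} → Set ℝ) (i : Ordinal.{0}) : Set ℝ :=
  gdeltaHull (P i ∪ ⋃ j < i, chainHull P j)
termination_by i

theorem chainHull_eq (P : Ordinal.{0} → Set ℝ) (i : Ordinal) :
    chainHull P i = gdeltaHull (P i ∪ ⋃ j < i, chainHull P j) := by
  rw [chainHull]

section chainHull

variable (P : Ordinal.{0} → Set ℝ)

theorem isGδ_chainHull (i : Ordinal) : IsGδ (chainHull P i) := by
  rw [chainHull_eq]; exact isGδ_gdeltaHull _

theorem chainHull_subset_Icc (i : Ordinal) : chainHull P i ⊆ Icc 0 1 := by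
  rw [chainHull_eq]; exact gdeltaHull_subset_Icc _

theorem subset_chainHull {i : Ordinal} (hi : P i ⊆ Icc 0 1) : P i ⊆ chainHull P i := by
  rw [chainHull_eq]
  exact fun x hx => inter_Icc_subset_gdeltaHull _ ⟨Or.inl hx, hi hx⟩

theorem chainHull_mono : Monotone (chainHull P) := by
  intro j i hji x hx
  rcases hji.eq_or_lt with rfl | hji
  · exact hx
  rw [chainHull_eq]
  exact inter_Icc_subset_gdeltaHull _
    ⟨Or.inr (mem_biUnion (x := j) hji hx), chainHull_subset_Icc P j hx⟩

theorem volume_chainHull_eq_zero {i : Ordinal} (hi : i < addNull.ord)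
    (hP : ∀ j ≤ i, P j ∈ NullSets) : volume (chainHull P i) = 0 := by
  induction i using WellFoundedLT.induction with
  | _ i ih =>
    have hprev : volume (⋃ j < i, chainHull P j) = 0 :=
      volume_biUnion_Iio_eq_zero_of_card_lt_addNull (Cardinal.lt_ord.1 hi) fun j hj =>
        ⟨chainHull_subset_Icc P j,
          ih j hj (hj.trans hi) fun k hk => hP k (hk.trans hj.le)⟩
    rw [chainHull_eq]
    exact nonpos_iff_eq_zero.1
      ((volume_gdeltaHull_le _).trans (measure_union_null (hP i le_rfl).2 hprev).le)

end chainHull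

theorem exists_monotoneOn_isGδ_null_superset {δ : Ordinal.{0}} (hδ : δ.card ≤ addNull)
    {N : Ordinal → Set ℝ} (hN : ∀ α < δ, N α ∈ NullSets) (hmono : MonotoneOn N (Iio δ)) :
    ∃ E : Ordinal → Set ℝ, MonotoneOn E (Iio δ) ∧
      ∀ α < δ, IsGδ (E α) ∧ E α ∈ NullSets ∧ N α ⊆ E α := by
  set a := δ.cof.ord
  obtain ⟨f, hf⟩ := exists_isFundamentalSeq (o := δ) (a := a) rfl
  let c : Ordinal → Ordinal := fun i => if h : i ∈ Iio a then f ⟨i, h⟩ else 0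
  have hc {i : Ordinal} (hi : i < a) : c i < δ := by
    rw [show c i = f ⟨i, hi⟩ from dif_pos hi]; exact (f _).2
  have hcofinal {α : Ordinal} (hα : α < δ) : ∃ i < a, α ≤ c i := by
    obtain ⟨_, ⟨i, rfl⟩, hαi⟩ := hf.isCofinal_range ⟨α, hα⟩
    exact ⟨i, i.2, by rw [show c i = f i from dif_pos i.2]; exact hαi⟩
  let idx : Ordinal → Ordinal := fun α => sInf {i | i < a ∧ α ≤ c i}
  have hidx {α : Ordinal} (hα : α < δ) : idx α < a ∧ α ≤ c (idx α) := csInf_mem (hcofinal hα)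
  have ha : a ≤ addNull.ord := Cardinal.ord_le_ord.2 ((cof_le_card δ).trans hδ)
  refine ⟨fun α => chainHull (N ∘ c) (idx α), ?_, fun α hα =>
    ⟨isGδ_chainHull _ _, ⟨chainHull_subset_Icc _ _, ?_⟩, ?_⟩⟩
  · intro β _ α hα hβα
    exact chainHull_mono _ (csInf_le' ⟨(hidx hα).1, hβα.trans (hidx hα).2⟩)
  · exact volume_chainHull_eq_zero _ ((hidx hα).1.trans_le ha) fun j hj =>
      hN _ (hc (hj.trans_lt (hidx hα).1))
  · have hcα := hc (hidx hα).1
    exact (hmono hα hcα (hidx hα).2).trans (subset_chainHull (N ∘ c) (hN _ hcα).1)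

theorem exists_monotoneOn_isGδ_superset_of_countable {ι : Type*} [Preorder ι] {S : Set ι}
    (hS : S.Countable) {H : ι → Set ℝ} (hH : ∀ i ∈ S, H i ⊆ Icc 0 1)
    (hnull : ∀ k ∈ S, ∀ i ∈ S, k ≤ i → volume (H k \ H i) = 0) :
    ∃ B : ι → Set ℝ, MonotoneOn B S ∧ ∀ i ∈ S, IsGδ (B i) ∧ B i ⊆ Icc 0 1 ∧
      (∀ k ∈ S, k ≤ i → H k ⊆ B i) ∧ volume (B i) ≤ volume (H i) := by
  let U : ι → Set ℝ := fun j => gdeltaHull (⋃ k ∈ S ∩ Iic j, H k)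
  have hHU {k j : ι} (hk : k ∈ S) (hkj : k ≤ j) : H k ⊆ U j := fun x hx =>
    subset_gdeltaHull (iUnion₂_subset fun k hk => hH k hk.1) (mem_biUnion ⟨hk, hkj⟩ hx)
  refine ⟨fun i => ⋂ j ∈ S ∩ Ici i, U j, ?_, fun i hi => ⟨?_, ?_, ?_, ?_⟩⟩
  · intro i _ i' _ hii'
    exact subset_iInter₂ fun j hj => biInter_subset_of_mem (t := U) ⟨hj.1, hii'.trans hj.2⟩
  · exact .biInter (hS.mono inter_subset_left) fun j _ => isGδ_gdeltaHull _
  · exact (biInter_subset_of_mem (t := U) (show i ∈ S ∩ Ici i from ⟨hi, le_rfl⟩)).trans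
      (gdeltaHull_subset_Icc _)
  · exact fun k hk hki => subset_iInter₂ fun j hj => hHU hk (hki.trans hj.2)
  · have hsplit : ⋃ k ∈ S ∩ Iic i, H k ⊆ H i ∪ ⋃ k ∈ S ∩ Iic i, H k \ H i := by
      refine iUnion₂_subset fun k hk x hx => ?_
      by_cases hxi : x ∈ H i
      · exact Or.inl hxi
      · exact Or.inr (mem_biUnion hk ⟨hx, hxi⟩)
    have hdiff : volume (⋃ k ∈ S ∩ Iic i, H k \ H i) = 0 :=
      (measure_biUnion_null_iff (hS.mono inter_subset_left)).2 fun k hk =>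
        hnull k hk.1 i hi hk.2
    calc volume (⋂ j ∈ S ∩ Ici i, U j) ≤ volume (U i) :=
          measure_mono (biInter_subset_of_mem ⟨hi, le_rfl⟩)
      _ ≤ volume (⋃ k ∈ S ∩ Iic i, H k) := volume_gdeltaHull_le _
      _ ≤ volume (H i ∪ ⋃ k ∈ S ∩ Iic i, H k \ H i) := measure_mono hsplit
      _ ≤ volume (H i) + volume (⋃ k ∈ S ∩ Iic i, H k \ H i) := measure_union_le _ _
      _ = volume (H i) := by rw [hdiff, add_zero]

section plateau

variable (M : Ordinal.{0} → Set ℝ) (η : Ordinal.{0})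

def plateauStart (α : Ordinal) : Ordinal := sInf {β | volume (M β) = volume (M α)}

-- Capping at `η` also keeps the infimum off the junk value `sInf ∅ = 0`.
def plateauEnd (α : Ordinal) : Ordinal := sInf {β | volume (M α) < volume (M β) ∨ η ≤ β}

def plateauStarts : Set Ordinal := {d | d < η ∧ plateauStart M d = d}

variable {M}

theorem plateauStart_le (α : Ordinal) : plateauStart M α ≤ α := csInf_le' rfl

theorem volume_plateauStart (α : Ordinal) : volume (M (plateauStart M α)) = volume (M α) :=
  csInf_mem (s := {β | volume (M β) = volume (M α)}) ⟨α, rfl⟩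

theorem plateauStart_eq_of_volume_eq {α β : Ordinal} (h : volume (M β) = volume (M α)) :
    plateauStart M β = plateauStart M α := by
  simp only [plateauStart, h]

theorem plateauStart_plateauStart (α : Ordinal) :
    plateauStart M (plateauStart M α) = plateauStart M α :=
  plateauStart_eq_of_volume_eq (volume_plateauStart α)

theorem plateauStart_mem_plateauStarts {α : Ordinal} (hα : α < η) :
    plateauStart M α ∈ plateauStarts M η :=
  ⟨(plateauStart_le α).trans_lt hα, plateauStart_plateauStart α⟩

theorem plateauEnd_le (α : Ordinal) : plateauEnd M η α ≤ η := csInf_le' (Or.inr le_rfl)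

theorem plateauEnd_plateauStart (α : Ordinal) :
    plateauEnd M η (plateauStart M α) = plateauEnd M η α := by
  simp only [plateauEnd, volume_plateauStart]

theorem volume_le_of_lt_plateauEnd {α β : Ordinal} (h : β < plateauEnd M η α) :
    volume (M β) ≤ volume (M α) :=
  not_lt.1 fun hlt =>
    (csInf_le' (s := {β | volume (M α) < volume (M β) ∨ η ≤ β}) (Or.inl hlt)).not_gt h

theorem plateauStart_plateauEnd {α : Ordinal} (h : plateauEnd M η α < η) :
    plateauStart M (plateauEnd M η α) = plateauEnd M η α := by
  have hlt : volume (M α) < volume (M (plateauEnd M η α)) :=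
    (csInf_mem (s := {β | volume (M α) < volume (M β) ∨ η ≤ β}) ⟨η, Or.inr le_rfl⟩).resolve_right
      h.not_ge
  refine (plateauStart_le _).antisymm (not_lt.1 fun hs => ?_)
  exact (volume_le_of_lt_plateauEnd η hs).not_gt (by rwa [volume_plateauStart])

variable (hM : Monotone M)
include hM

theorem lt_plateauEnd {α : Ordinal} (hα : α < η) : α < plateauEnd M η α := by
  rcases csInf_mem (s := {β | volume (M α) < volume (M β) ∨ η ≤ β}) ⟨η, Or.inr le_rfl⟩ with h | h
  · exact not_le.1 fun hle => h.not_ge (measure_mono (hM hle))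
  · exact hα.trans_le h

theorem volume_eq_of_lt_plateauEnd {α β : Ordinal} (hαβ : α ≤ β) (hβ : β < plateauEnd M η α) :
    volume (M β) = volume (M α) :=
  (volume_le_of_lt_plateauEnd η hβ).antisymm (measure_mono (hM hαβ))

theorem plateauStart_mono : Monotone (plateauStart M) := by
  intro β α hβα
  refine not_lt.1 fun h => h.ne (plateauStart_eq_of_volume_eq ?_).symm
  refine (measure_mono (hM hβα)).antisymm ?_
  rw [← volume_plateauStart α]
  exact measure_mono (hM (h.le.trans (plateauStart_le β)))

theorem plateauEnd_le_plateauStart {α β : Ordinal} (hβα : β ≤ α)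
    (hne : plateauStart M β ≠ plateauStart M α) : plateauEnd M η β ≤ plateauStart M α := by
  refine not_lt.1 fun h => hne (plateauStart_eq_of_volume_eq ?_)
  exact (measure_mono (hM hβα)).antisymm (volume_plateauStart α ▸ volume_le_of_lt_plateauEnd η h)

theorem plateauEnd_mem_plateauStarts {α β : Ordinal} (hα : α < η) (hβα : β ≤ α)
    (hne : plateauStart M β ≠ plateauStart M α) : plateauEnd M η β ∈ plateauStarts M η := by
  have hlt := (plateauEnd_le_plateauStart η hM hβα hne).trans_lt ((plateauStart_le α).trans_lt hα)
  exact ⟨hlt, plateauStart_plateauEnd η hlt⟩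

theorem countable_plateauStarts : (plateauStarts M η).Countable := by
  refine StrictMonoOn.countable_of_wellFoundedLT (f := fun d => volume (M d)) ?_
  intro d hd d' hd' hlt
  refine (measure_mono (hM hlt.le)).lt_of_ne fun h => hlt.ne ?_
  calc d = plateauStart M d := hd.2.symm
    _ = plateauStart M d' := plateauStart_eq_of_volume_eq h
    _ = d' := hd'.2

end plateau

section hulls

variable {M : Ordinal.{0} → Set ℝ} {η : Ordinal.{0}} (hη : η.card ≤ addNull) (hM : Monotone M)
  (hMI : ∀ α, M α ⊆ Icc 0 1)
include hη hM hMI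

theorem exists_monotoneOn_isGδ_null_superset_sdiff {d : Ordinal} {B : Set ℝ}
    (hB : MeasurableSet B) (hMB : M d ⊆ B) :
    ∃ E : Ordinal → Set ℝ, MonotoneOn E (Iio (plateauEnd M η d)) ∧
      ∀ α < plateauEnd M η d, IsGδ (E α) ∧ E α ∈ NullSets ∧ M α \ B ⊆ E α := by
  refine exists_monotoneOn_isGδ_null_superset ((card_le_card (plateauEnd_le η d)).trans hη)
    (fun α hα => ⟨sdiff_subset.trans (hMI α), ?_⟩)
    fun β _ α _ hβα => sdiff_subset_sdiff_left (hM hβα)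
  rcases le_total α d with hαd | hdα
  · rw [sdiff_eq_empty.2 ((hM hαd).trans hMB), measure_empty]
  · exact measure_sdiff_eq_zero_of_le hB hMB (hM hdα)
      (volume_eq_of_lt_plateauEnd η hM hdα hα).le (volume_ne_top_of_subset_Icc (hMI α))

theorem exists_monotoneOn_isGδ_hull :
    ∃ A : Ordinal → Set ℝ, MonotoneOn A (Iio η) ∧
      ∀ α < η, IsGδ (A α) ∧ A α ⊆ Icc 0 1 ∧ M α ⊆ A α ∧ volume (A α) = volume (M α) := by
  obtain ⟨B, hBmono, hB⟩ := exists_monotoneOn_isGδ_superset_of_countable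
    (countable_plateauStarts η hM) (H := fun d => gdeltaHull (M d))
    (fun _ _ => gdeltaHull_subset_Icc _)
    fun k _ i _ hki => volume_gdeltaHull_sdiff_gdeltaHull (hM hki) (hMI i)
  have hE (d : Ordinal) (hd : d ∈ plateauStarts M η) :=
    exists_monotoneOn_isGδ_null_superset_sdiff hη hM hMI (hB d hd).1.measurableSet
      ((subset_gdeltaHull (hMI d)).trans ((hB d hd).2.2.1 d hd le_rfl))
  choose! E hEmono hE using hE
  have hstart {α : Ordinal} (hα : α < η) := plateauStart_mem_plateauStarts (M := M) η hα
  have hlt_end {α : Ordinal} (hα : α < η) : α < plateauEnd M η (plateauStart M α) :=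
    plateauEnd_plateauStart η α ▸ lt_plateauEnd η hM hα
  refine ⟨fun α => B (plateauStart M α) ∪
    (E (plateauStart M α) α ∩ gdeltaHull (M (plateauEnd M η (plateauStart M α)))), ?_, ?_⟩
  · intro β hβ α hα hβα
    by_cases hs : plateauStart M β = plateauStart M α
    · simp only [hs]
      exact union_subset_union_right _ (inter_subset_inter_left _
        (hEmono _ (hstart hα) (hβα.trans_lt (hlt_end hα)) (hlt_end hα) hβα))
    · have hend := plateauEnd_le_plateauStart η hM hβα hs
      dsimp only
      rw [plateauEnd_plateauStart]
      refine union_subset (hBmono (hstart hβ) (hstart hα) (plateauStart_mono hM hβα)) ?_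
        |>.trans subset_union_left
      exact inter_subset_right.trans
        ((hB _ (hstart hα)).2.2.1 _ (plateauEnd_mem_plateauStarts η hM hα hβα hs) hend)
  · intro α hα
    obtain ⟨hEG, hEnull, hEsub⟩ := hE _ (hstart hα) α (hlt_end hα)
    obtain ⟨hBG, hBI, -, hBvol⟩ := hB _ (hstart hα)
    dsimp only
    set d := plateauStart M α
    have hsub : M α ⊆ B d ∪ (E d α ∩ gdeltaHull (M (plateauEnd M η d))) := fun x hx =>
      or_iff_not_imp_left.2 fun hxB =>
        ⟨hEsub ⟨hx, hxB⟩, subset_gdeltaHull (hMI _) (hM (hlt_end hα).le hx)⟩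
    refine ⟨hBG.union (hEG.inter (isGδ_gdeltaHull _)),
      union_subset hBI (inter_subset_right.trans (gdeltaHull_subset_Icc _)), hsub,
      le_antisymm ?_ (measure_mono hsub)⟩
    calc volume (B d ∪ (E d α ∩ gdeltaHull (M (plateauEnd M η d))))
        ≤ volume (B d) + volume (E d α) :=
          (measure_union_le _ _).trans (by gcongr; exact inter_subset_left)
      _ ≤ volume (M α) := by
          rw [hEnull.2, add_zero, ← volume_plateauStart α]
          exact hBvol.trans (volume_gdeltaHull_le _)

end hulls

/-- Every increasing chain of subsets of `[0,1]` of order type `η < add(N)⁺` (the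
successor cardinal of `add(N)`) admits an increasing family of Gδ hulls. Here `volume`
applied to an arbitrary set is the Lebesgue outer measure, and cardinals are identified
with their initial ordinals. -/
theorem monotone_Gdelta_hull_on_wellordered_chain_below_succ_add
    (η : Ordinal) (hη : η < (Order.succ addNull).ord) (M : Ordinal → Set ℝ)
    (hM : ∀ α < η, M α ⊆ Icc (0:ℝ) 1)
    (hmono : ∀ α β : Ordinal, α ≤ β → β < η → M α ⊆ M β) :
    ∃ A : Ordinal → Set ℝ,
      (∀ α < η, IsGδ (A α) ∧ A α ⊆ Icc (0:ℝ) 1 ∧ M α ⊆ A α ∧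
        volume (A α) = volume (M α)) ∧
      (∀ α β : Ordinal, α ≤ β → β < η → A α ⊆ A β) := by
  let M' : Ordinal → Set ℝ := fun α => ⋃ β ∈ Iic α ∩ Iio η, M β
  have hM'_mono : Monotone M' := fun α α' h =>
    biUnion_subset_biUnion_left (inter_subset_inter_left _ (Iic_subset_Iic.2 h))
  have hM'_Icc (α : Ordinal) : M' α ⊆ Icc 0 1 := iUnion₂_subset fun β hβ => hM β hβ.2
  have hM'_eq {α : Ordinal} (hα : α < η) : M' α = M α :=
    (iUnion₂_subset fun β hβ => hmono β α hβ.1 hα).antisymm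
      (subset_biUnion_of_mem (u := M) ⟨le_refl α, hα⟩)
  obtain ⟨A, hAmono, hA⟩ := exists_monotoneOn_isGδ_hull
    (Order.lt_succ_iff.1 (Cardinal.lt_ord.1 hη)) hM'_mono hM'_Icc
  refine ⟨A, fun α hα => ?_, fun α β hαβ hβ => hAmono (hαβ.trans_lt hβ) hβ hαβ⟩
  simpa only [hM'_eq hα] using hA α hα
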